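/- If π is a foliated bivector field on a manifold M, then for every H ∈ C^∞(M) there exists a (1,1)-tensor field C_H : TM → TM such that (L_{X_H} π)^# = C_H ∘ π^#. -/

import Mathlib

open Matrix

noncomputable def lieBracketVF {n : ℕ} (X Y : (Fin n → ℝ) → (Fin n → ℝ)) :
    (Fin n → ℝ) → (Fin n → ℝ) :=
  fun m => fderiv ℝ Y m (X m) - fderiv ℝ X m (Y m)

noncomputable def gradf {n : ℕ} (F : (Fin n → ℝ) → ℝ) (m : Fin n → ℝ) : Fin n → ℝ :=
  fun i => fderiv ℝ F m (Pi.single i 1)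

noncomputable def ham {n : ℕ} (π : (Fin n → ℝ) → Matrix (Fin n) (Fin n) ℝ)
    (F : (Fin n → ℝ) → ℝ) : (Fin n → ℝ) → (Fin n → ℝ) :=
  fun m => π m *ᵥ gradf F m

def SmoothBiv {n : ℕ} (π : (Fin n → ℝ) → Matrix (Fin n) (Fin n) ℝ) : Prop :=
  ∀ i j, ContDiff ℝ (⊤ : ℕ∞) fun m => π m i j

def AntiSymmBiv {n : ℕ} (π : (Fin n → ℝ) → Matrix (Fin n) (Fin n) ℝ) : Prop :=
  ∀ m, (π m)ᵀ = -π m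

def Foliated {n : ℕ} (π : (Fin n → ℝ) → Matrix (Fin n) (Fin n) ℝ) : Prop :=
  ∀ α β : (Fin n → ℝ) → (Fin n → ℝ), ContDiff ℝ (⊤ : ℕ∞) α → ContDiff ℝ (⊤ : ℕ∞) β →
    ∃ γ : (Fin n → ℝ) → (Fin n → ℝ), ContDiff ℝ (⊤ : ℕ∞) γ ∧
      ∀ m, lieBracketVF (fun p => π p *ᵥ α p) (fun p => π p *ᵥ β p) m = π m *ᵥ γ m

def WeaklyFoliated {n : ℕ} (π : (Fin n → ℝ) → Matrix (Fin n) (Fin n) ℝ) : Prop :=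
  ∀ α β : (Fin n → ℝ) → (Fin n → ℝ), ContDiff ℝ (⊤ : ℕ∞) α → ContDiff ℝ (⊤ : ℕ∞) β →
    ∀ m, ∃ ξ : Fin n → ℝ,
      lieBracketVF (fun p => π p *ᵥ α p) (fun p => π p *ᵥ β p) m = π m *ᵥ ξ

noncomputable def pd {n : ℕ} (f : (Fin n → ℝ) → ℝ) (l : Fin n) (m : Fin n → ℝ) : ℝ :=
  fderiv ℝ f m (Pi.single l 1)

noncomputable def schouten {n : ℕ} (π : (Fin n → ℝ) → Matrix (Fin n) (Fin n) ℝ)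
    (m : Fin n → ℝ) (i j k : Fin n) : ℝ :=
  ∑ l, (π m l i * pd (fun p => π p j k) l m + π m l j * pd (fun p => π p k i) l m
      + π m l k * pd (fun p => π p i j) l m)

noncomputable def pb {n : ℕ} (π : (Fin n → ℝ) → Matrix (Fin n) (Fin n) ℝ)
    (F G : (Fin n → ℝ) → ℝ) (m : Fin n → ℝ) : ℝ :=
  dotProduct (gradf G m) (π m *ᵥ gradf F m)

noncomputable def jacobianM {n : ℕ} (X : (Fin n → ℝ) → (Fin n → ℝ)) (m : Fin n → ℝ) :
    Matrix (Fin n) (Fin n) ℝ :=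
  Matrix.of fun i l => fderiv ℝ (fun p => X p i) m (Pi.single l 1)

noncomputable def lieDerivBiv {n : ℕ} (X : (Fin n → ℝ) → (Fin n → ℝ))
    (π : (Fin n → ℝ) → Matrix (Fin n) (Fin n) ℝ) (m : Fin n → ℝ) :
    Matrix (Fin n) (Fin n) ℝ :=
  (Matrix.of fun i j => fderiv ℝ (fun p => π p i j) m (X m))
    - jacobianM X m * π m - π m * (jacobianM X m)ᵀ

/-! Applying the foliation condition to `dH` and the constant covectors `dxⱼ` gives smooth `γⱼ`
with `[X_H, π♯dxⱼ] = π♯γⱼ`. Since `(L_X π)♯dxⱼ = [X, π♯dxⱼ] - π♯(dXⱼ)`, this reads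
`L_X π = π Dᵀ` for the smooth matrix `D` with rows `γⱼ - dXⱼ`. Both `L_X π` and `π` are
skew-symmetric, so transposing turns this into `L_X π = D π`. -/

section

variable {n : ℕ}

theorem jacobianM_mulVec {X : (Fin n → ℝ) → (Fin n → ℝ)} {m : Fin n → ℝ}
    (hX : DifferentiableAt ℝ X m) (v : Fin n → ℝ) :
    jacobianM X m *ᵥ v = fderiv ℝ X m v := by
  have hJ :
      jacobianM X m = LinearMap.toMatrix' (fderiv ℝ X m : (Fin n → ℝ) →ₗ[ℝ] Fin n → ℝ) := by
    ext i l
    simp [jacobianM, fderiv_apply hX]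
  rw [hJ, LinearMap.toMatrix'_mulVec]
  rfl

theorem contDiff_gradf {F : (Fin n → ℝ) → ℝ} (hF : ContDiff ℝ (⊤ : ℕ∞) F) :
    ContDiff ℝ (⊤ : ℕ∞) (gradf F) :=
  contDiff_pi' fun _ => (hF.fderiv_right (by simp)).clm_apply contDiff_const

theorem SmoothBiv.contDiff_mulVec {π : (Fin n → ℝ) → Matrix (Fin n) (Fin n) ℝ}
    (hs : SmoothBiv π) {v : (Fin n → ℝ) → (Fin n → ℝ)} (hv : ContDiff ℝ (⊤ : ℕ∞) v) :
    ContDiff ℝ (⊤ : ℕ∞) fun m => π m *ᵥ v m :=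
  contDiff_pi' fun i => by
    simpa only [Matrix.mulVec, dotProduct] using
      ContDiff.sum fun k _ => (hs i k).mul (contDiff_pi.1 hv k)

theorem contDiff_jacobianM_apply {X : (Fin n → ℝ) → (Fin n → ℝ)}
    (hX : ContDiff ℝ (⊤ : ℕ∞) X) (i l : Fin n) :
    ContDiff ℝ (⊤ : ℕ∞) fun m => jacobianM X m i l :=
  ((contDiff_pi.1 hX i).fderiv_right (by simp)).clm_apply contDiff_const

theorem lieDerivBiv_eq_lieBracketVF_sub {X : (Fin n → ℝ) → (Fin n → ℝ)}
    {π : (Fin n → ℝ) → Matrix (Fin n) (Fin n) ℝ} {m : Fin n → ℝ}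
    (hX : DifferentiableAt ℝ X m) (hπ : ∀ i j, DifferentiableAt ℝ (fun p => π p i j) m) :
    lieDerivBiv X π m =
      Matrix.of (fun i j => lieBracketVF X (fun p => π p *ᵥ Pi.single j 1) m i)
        - π m * (jacobianM X m)ᵀ := by
  ext i j
  have hcol : fderiv ℝ (fun p => π p *ᵥ Pi.single j 1) m (X m) i
      = fderiv ℝ (fun p => π p i j) m (X m) := by
    have hcol_fun : (fun p => π p *ᵥ Pi.single j 1) = fun p i => π p i j :=
      funext fun p => funext fun i => by simp
    rw [hcol_fun, fderiv_pi fun i => hπ i j]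
    rfl
  simp only [lieDerivBiv, lieBracketVF, ← jacobianM_mulVec hX, Matrix.sub_apply,
    Matrix.of_apply, Pi.sub_apply, hcol]
  simp [Matrix.mul_apply, Matrix.mulVec, dotProduct, Pi.single_apply]

theorem lieDerivBiv_transpose {X : (Fin n → ℝ) → (Fin n → ℝ)}
    {π : (Fin n → ℝ) → Matrix (Fin n) (Fin n) ℝ} (ha : AntiSymmBiv π) (m : Fin n → ℝ) :
    (lieDerivBiv X π m)ᵀ = -lieDerivBiv X π m := by
  have hF : (Matrix.of fun i j => fderiv ℝ (fun p => π p i j) m (X m))ᵀ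
      = -Matrix.of fun i j => fderiv ℝ (fun p => π p i j) m (X m) := by
    ext i j
    have hji : (fun p => π p j i) = fun p => -π p i j := funext fun p => by
      simpa using congrFun (congrFun (ha p) i) j
    simp [hji, fderiv_fun_neg]
  simp only [lieDerivBiv, Matrix.transpose_sub, Matrix.transpose_mul,
    Matrix.transpose_transpose, hF, ha m, Matrix.neg_mul, Matrix.mul_neg]
  abel

theorem Matrix.eq_mul_of_eq_mul_transpose {ι R : Type*} [Fintype ι] [CommRing R]
    {A P D : Matrix ι ι R} (hA : Aᵀ = -A) (hP : Pᵀ = -P) (h : A = P * Dᵀ) :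
    A = D * P := by
  rw [← neg_neg A, ← hA, h, Matrix.transpose_mul, Matrix.transpose_transpose, hP,
    Matrix.mul_neg, neg_neg]

end

theorem foliated_gives_one_one_tensor {n : ℕ}
    (π : (Fin n → ℝ) → Matrix (Fin n) (Fin n) ℝ)
    (hs : SmoothBiv π) (ha : AntiSymmBiv π) (hfol : Foliated π) :
    ∀ H : (Fin n → ℝ) → ℝ, ContDiff ℝ (⊤ : ℕ∞) H →
      ∃ C : (Fin n → ℝ) → Matrix (Fin n) (Fin n) ℝ,
        (∀ i j, ContDiff ℝ (⊤ : ℕ∞) fun m => C m i j) ∧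
        ∀ m, lieDerivBiv (ham π H) π m = C m * π m := by
  intro H hH
  have hX : ContDiff ℝ (⊤ : ℕ∞) (ham π H) := hs.contDiff_mulVec (contDiff_gradf hH)
  have hfol_col : ∀ j : Fin n, ∃ γ : (Fin n → ℝ) → (Fin n → ℝ), ContDiff ℝ (⊤ : ℕ∞) γ ∧
      ∀ m, lieBracketVF (ham π H) (fun p => π p *ᵥ Pi.single j 1) m = π m *ᵥ γ m :=
    fun j => hfol (gradf H) (fun _ => Pi.single j 1) (contDiff_gradf hH) contDiff_const
  choose γ hγs hγ using hfol_col
  refine ⟨fun m => Matrix.of (fun j => γ j m) - jacobianM (ham π H) m,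
    fun i j => (contDiff_pi.1 (hγs i) j).sub (contDiff_jacobianM_apply hX i j), fun m => ?_⟩
  refine Matrix.eq_mul_of_eq_mul_transpose (lieDerivBiv_transpose ha m) (ha m) ?_
  rw [lieDerivBiv_eq_lieBracketVF_sub (hX.differentiable (by simp) m)
    fun i j => (hs i j).differentiable (by simp) m]
  have hbracket :
      Matrix.of (fun i j => lieBracketVF (ham π H) (fun p => π p *ᵥ Pi.single j 1) m i)
        = π m * (Matrix.of fun j => γ j m)ᵀ := by
    ext i j
    simp only [hγ, Matrix.of_apply, Matrix.mul_apply, Matrix.transpose_apply, Matrix.mulVec,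
      dotProduct]
  rw [hbracket, Matrix.transpose_sub, Matrix.mul_sub]
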